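/- arXiv:1506.03404 — 3 statements merged into one kernel-verified Lean document; each statement's English description precedes it below -/
import Mathlib

section
/- Let R be a supertropical semiring such that eR is a nontrivial semifield (i.e. 𝒢(R) = eR \ {0} is a group under multiplication with 𝒢(R) ≠ {e}), and let (q,b) be a quadratic pair on an R-module V. Let x, y ∈ V \ {0}. If either (i) e·b(x,y)² ≤ e·q(x)·q(y), or (ii) both q(x) and q(y) lie in eR and e·b(x,y)² ≤ c·e·q(x)·q(y) for every c ∈ 𝒢(R) with c > e, then q is quasilinear on Rx + Ry, i.e. q(u+v) = q(u)+q(v) for all u, v ∈ Rx + Ry. -/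
open scoped Classical

namespace Supertrop

section Defs

variable (R : Type*) [CommSemiring R]

/-- The distinguished element `e = 1 + 1` of a semiring. -/
def eps : R := 1 + 1

/-- `R` is a supertropical semiring: `e` is additively idempotent, and the two
supertropical addition axioms hold. -/
def IsSupertropical : Prop :=
  eps R + eps R = eps R ∧
    (∀ x y : R, eps R * x ≠ eps R * y → x + y = x ∨ x + y = y) ∧
    (∀ x y : R, eps R * x = eps R * y → x + y = eps R * y)

/-- The ghost ideal `eR`, as a subset of `R`. -/
def eSet : Set R := Set.range (fun a : R => eps R * a)

/-- The tangible elements `𝒯(R) = R \ eR`. -/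
def tangible : Set R := {x : R | x ∉ eSet R}

/-- The nonzero ghost elements `𝒢(R) = eR \ {0}`. -/
def ghost : Set R := eSet R \ {0}

end Defs

section Orders

variable {R : Type*} [CommSemiring R]

/-- The minimal ordering on an additive monoid: `x ≤ y` iff `∃ z, x + z = y`. -/
def mle {M : Type*} [AddCommMonoid M] (x y : M) : Prop := ∃ z, x + z = y

/-- Strict minimal ordering. -/
def mlt {M : Type*} [AddCommMonoid M] (x y : M) : Prop := mle x y ∧ x ≠ y

/-- The (total) ordering of the bipotent semiring `eR`: `u ≤ v ⟺ u + v = v`. -/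
def gle (u v : R) : Prop := u + v = v

/-- The strict ordering of `eR`. -/
def glt (u v : R) : Prop := gle u v ∧ u ≠ v

end Orders

section SSF

variable (R : Type*) [CommSemiring R]

/-- `R` is a supersemifield: supertropical, every tangible element is invertible in `R`,
and `𝒢(R)` is a group under multiplication with identity `e`. -/
def IsSupersemifield : Prop :=
  IsSupertropical R ∧
    (∀ t ∈ tangible R, IsUnit t) ∧
    eps R ∈ ghost R ∧
    (∀ g ∈ ghost R, ∀ h ∈ ghost R, g * h ∈ ghost R) ∧
    (∀ g ∈ ghost R, ∃ h ∈ ghost R, g * h = eps R)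

/-- The supersemifield `R` is tangible: `e·𝒯(R) = 𝒢(R)`. -/
def TangibleSSF : Prop := (fun t => eps R * t) '' tangible R = ghost R

/-- Nontriviality: `𝒢(R) ≠ {e}`. -/
def NontrivialG : Prop := ghost R ≠ {eps R}

/-- `R` is discrete: `𝒢(R)` has a smallest element `> e`. -/
def DiscreteR : Prop :=
  ∃ c ∈ ghost R, glt (eps R) c ∧ ∀ d ∈ ghost R, glt (eps R) d → gle c d

/-- `R` is dense: `𝒢(R)` has no smallest element `> e`. -/
def DenseR : Prop := ¬ DiscreteR R

/-- `eR` is a semifield: `e ≠ 0`, `𝒢(R)` is closed under multiplication, and every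
element of `𝒢(R)` is invertible in `eR` with respect to the identity `e`. -/
def GhostSemifield : Prop :=
  eps R ∈ ghost R ∧
    (∀ g ∈ ghost R, ∀ h ∈ ghost R, g * h ∈ ghost R) ∧
    (∀ g ∈ ghost R, ∃ h ∈ ghost R, g * h = eps R)

end SSF

section Quad

variable {R : Type*} [CommSemiring R] {V : Type*} [AddCommMonoid V] [Module R V]

/-- `b` is a (symmetric bilinear) companion of the quadratic form `q`. -/
def IsCompanion (q : V → R) (b : V → V → R) : Prop :=
  (∀ x y, b x y = b y x) ∧
    (∀ x y z, b (x + y) z = b x z + b y z) ∧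
    (∀ (a : R) (x y : V), b (a • x) y = a * b x y) ∧
    (∀ x y, q (x + y) = q x + q y + b x y)

/-- `(q, b)` is a quadratic pair on `V`. -/
def IsQuadPair (q : V → R) (b : V → V → R) : Prop :=
  (∀ (a : R) (x : V), q (a • x) = a ^ 2 * q x) ∧ IsCompanion q b

/-- `q` is a quadratic form on `V`. -/
def IsQuadForm (q : V → R) : Prop := ∃ b, IsQuadPair q b

/-- `q` is quasilinear (i.e. additive) on the submodule `W`. -/
def QuasilinearOn (q : V → R) (W : Submodule R V) : Prop :=
  ∀ u ∈ W, ∀ v ∈ W, q (u + v) = q u + q v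

/-- `x` is `q`-minimal: `q x' < q x` for every `x' < x` (in the minimal orderings). -/
def QMinimal (q : V → R) (x : V) : Prop := ∀ x' : V, mlt x' x → mlt (q x') (q x)

/-- The maximum of two elements of `R` with respect to the minimal ordering. -/
noncomputable def rsup (a b : R) : R := if a = b then a else a + b

/-- The componentwise maximum `x ∨ y` (in the minimal ordering) of two vectors
of a free module. -/
noncomputable def vsup {ι : Type*} (bV : Module.Basis ι R V) (x y : V) : V :=
  bV.repr.symm (Finsupp.zipWith rsup (by simp [rsup]) (bV.repr x) (bV.repr y))

/-- The restriction `x(J)` of a vector to a subset `J` of the index set of the base. -/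
noncomputable def restrict {ι : Type*} (bV : Module.Basis ι R V) (x : V) (J : Finset ι) : V :=
  ∑ i ∈ J, (bV.repr x) i • bV i

/-- The CS-ratio `CS(x,y) = e·b(x,y)² · (e·q(x)·q(y))⁻¹`, where `inv` is the
inversion of the semifield `eR`. -/
noncomputable def CSratio (q : V → R) (b : V → V → R) (inv : R → R) (x y : V) : R :=
  eps R * (b x y) ^ 2 * inv (eps R * (q x * q y))

end Quad

/-!
Write `u = a x + a' y` and `v = c x + c' y`. Each of the four cross terms of `b(u, v)` is absorbed
by the sum of the `q`-values of its two arguments, a sub-sum of `q(u) + q(v)`. For two multiples of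
one vector this is the Frobenius identity `(a + c)² = a² + c²`. For `a x` and `c y` it is a
supertropical Cauchy–Schwarz inequality: if `e t² ≤ e p q` then `e t ≤ e (p + q)`, with equality
only if `e p = e q`, in which case `p + q` is ghost and absorbs `t` all the same.
-/

section Ghost

variable {R : Type*} [CommSemiring R]

local notation "ε" => eps R

lemma gle_trans {u v w : R} (huv : gle u v) (hvw : gle v w) : gle u w := by
  unfold gle at *
  rw [← hvw, ← add_assoc, huv]

lemma gle_antisymm {u v : R} (huv : gle u v) (hvu : gle v u) : u = v := by
  unfold gle at *
  rw [← hvu, add_comm, huv]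

lemma gle_mul_right {u v : R} (w : R) (h : gle u v) : gle (u * w) (v * w) := by
  unfold gle at *
  rw [← add_mul, h]

lemma eq_zero_of_gle_zero {u : R} (h : gle u 0) : u = 0 := by
  rwa [gle, add_zero] at h

lemma eps_mul_eps (hR : IsSupertropical R) : ε * ε = ε := by
  calc ε * ε = ε + ε := by unfold eps; ring
    _ = ε := hR.1

lemma eps_mul_eps_mul (hR : IsSupertropical R) (a : R) : ε * (ε * a) = ε * a := by
  rw [← mul_assoc, eps_mul_eps hR]

lemma eps_mul_of_mem_eSet (hR : IsSupertropical R) {u : R} (hu : u ∈ eSet R) : ε * u = u := by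
  obtain ⟨a, rfl⟩ := hu
  exact eps_mul_eps_mul hR a

lemma eps_mul_of_mem_ghost (hR : IsSupertropical R) {g : R} (hg : g ∈ ghost R) : ε * g = g :=
  eps_mul_of_mem_eSet hR hg.1

lemma gle_refl (hR : IsSupertropical R) {u : R} (hu : ε * u = u) : gle u u := by
  rw [gle, hR.2.2 u u rfl, hu]

lemma gle_self_add (hR : IsSupertropical R) {u : R} (v : R) (hu : ε * u = u) : gle u (u + v) := by
  rw [gle, ← add_assoc, gle_refl hR hu]

lemma gle_mul_add_mul_add (hR : IsSupertropical R) {u v : R} (hu : ε * u = u)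
    (hv : ε * v = v) : gle (u * v) ((u + v) * (u + v)) := by
  refine gle_trans (gle_mul_right v (gle_self_add hR v hu)) ?_
  rw [mul_comm, mul_comm (u + v), add_comm u]
  exact gle_mul_right _ (gle_self_add hR u hv)

lemma gle_total (hR : IsSupertropical R) {u v : R} (hu : ε * u = u) (hv : ε * v = v) :
    gle u v ∨ gle v u := by
  by_cases huv : u = v
  · exact Or.inl (huv ▸ gle_refl hR hu)
  · rcases hR.2.1 u v (by rwa [hu, hv]) with h | h
    · exact Or.inr (by rwa [gle, add_comm])
    · exact Or.inl h

lemma add_eq_left_of_gle (hR : IsSupertropical R) {s t : R} (hle : gle (ε * t) (ε * s))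
    (hghost : ε * t = ε * s → ε * s = s) : s + t = s := by
  by_cases heq : ε * t = ε * s
  · rw [add_comm, hR.2.2 t s heq, hghost heq]
  · rcases hR.2.1 s t (Ne.symm heq) with h | h
    · exact h
    · exact absurd (gle_antisymm hle (by rw [gle, ← mul_add, h])) heq

end Ghost

section GhostSemifield

variable {R : Type*} [CommSemiring R]

local notation "ε" => eps R

lemma mem_ghost_of_eps_mul {g : R} (hg : ε * g = g) (hg0 : g ≠ 0) : g ∈ ghost R :=
  ⟨⟨g, hg⟩, hg0⟩

lemma exists_mul_eq_eps (hR : IsSupertropical R) (hsf : GhostSemifield R) {u : R}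
    (hu : ε * u = u) (hu0 : u ≠ 0) : ∃ k, ε * k = k ∧ u * k = ε := by
  obtain ⟨k, hk, huk⟩ := hsf.2.2 u (mem_ghost_of_eps_mul hu hu0)
  exact ⟨k, eps_mul_of_mem_ghost hR hk, huk⟩

lemma gle_of_mul_gle_mul_right (hR : IsSupertropical R) (hsf : GhostSemifield R) {u v k : R}
    (hu : ε * u = u) (hv : ε * v = v) (hk : ε * k = k) (hk0 : k ≠ 0)
    (h : gle (u * k) (v * k)) : gle u v := by
  obtain ⟨k', -, hkk'⟩ := exists_mul_eq_eps hR hsf hk hk0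
  have h' := gle_mul_right k' h
  rwa [mul_assoc, mul_assoc, hkk', mul_comm u, mul_comm v, hu, hv] at h'

lemma eq_zero_of_mul_self_eq_zero (hR : IsSupertropical R) (hsf : GhostSemifield R) {u : R}
    (hu : ε * u = u) (h : u * u = 0) : u = 0 := by
  by_contra hu0
  obtain ⟨k, -, huk⟩ := exists_mul_eq_eps hR hsf hu hu0
  apply hsf.1.2
  calc ε = (u * k) * (u * k) := by rw [huk, eps_mul_eps hR]
    _ = 0 := by rw [mul_mul_mul_comm, h, zero_mul]

lemma gle_of_mul_self_gle_mul_self (hR : IsSupertropical R) (hsf : GhostSemifield R) {u v : R}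
    (hu : ε * u = u) (hv : ε * v = v) (h : gle (u * u) (v * v)) : gle u v := by
  rcases gle_total hR hu hv with huv | hvu
  · exact huv
  by_cases hv0 : v = 0
  · subst hv0
    rw [eq_zero_of_mul_self_eq_zero hR hsf hu (eq_zero_of_gle_zero (by simpa using h))]
    exact gle_refl hR hv
  · exact gle_of_mul_gle_mul_right hR hsf hu hv hv hv0
      (gle_trans (by simpa only [mul_comm] using gle_mul_right u hvu) h)

lemma eq_of_add_mul_self_gle_mul (hR : IsSupertropical R) (hsf : GhostSemifield R) {u v : R}
    (hu : ε * u = u) (hv : ε * v = v) (h : gle ((u + v) * (u + v)) (u * v)) : u = v := by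
  wlog huv : gle u v generalizing u v
  · exact (this hv hu (by rwa [add_comm, mul_comm v u])
      ((gle_total hR hu hv).resolve_left huv)).symm
  rw [huv] at h
  by_cases hv0 : v = 0
  · subst hv0
    exact eq_zero_of_gle_zero huv
  · exact gle_antisymm huv (gle_of_mul_gle_mul_right hR hsf hv hu hv hv0 h)

lemma add_add_eq_of_sq_gle (hR : IsSupertropical R) (hsf : GhostSemifield R) {p q t : R}
    (h : gle (ε * t ^ 2) (ε * (p * q))) : p + q + t = p + q := by
  have hp := eps_mul_eps_mul hR p
  have hq := eps_mul_eps_mul hR q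
  have hsq : gle ((ε * t) * (ε * t)) ((ε * p) * (ε * q)) := by
    rwa [mul_mul_mul_comm, mul_mul_mul_comm ε p, eps_mul_eps hR, ← sq]
  have hsum := gle_mul_add_mul_add hR hp hq
  apply add_eq_left_of_gle hR
  · rw [mul_add]
    exact gle_of_mul_self_gle_mul_self hR hsf (eps_mul_eps_mul hR t)
      (by rw [mul_add, hp, hq]) (gle_trans hsq hsum)
  · intro hts
    rw [mul_add] at hts ⊢
    have hpq := eq_of_add_mul_self_gle_mul hR hsf hp hq (hts ▸ hsq)
    rw [hR.2.2 p q hpq, hpq]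
    exact gle_refl hR hq

lemma add_sq_eq (hR : IsSupertropical R) (hsf : GhostSemifield R) (a c : R) :
    (a + c) ^ 2 = a ^ 2 + c ^ 2 := by
  have hexp : (a + c) ^ 2 = a ^ 2 + c ^ 2 + ε * (a * c) := by unfold eps; ring
  rw [hexp]
  refine add_add_eq_of_sq_gle hR hsf ?_
  rw [mul_pow, sq ε, eps_mul_eps hR, eps_mul_eps_mul hR, mul_pow]
  exact gle_refl hR (eps_mul_eps_mul hR _)

end GhostSemifield

section Nontrivial

variable {R : Type*} [CommSemiring R]

local notation "ε" => eps R

lemma exists_eps_glt (hR : IsSupertropical R) (hsf : GhostSemifield R) (hnt : NontrivialG R) :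
    ∃ c ∈ ghost R, glt ε c := by
  obtain ⟨g, hg, hgε⟩ : ∃ g ∈ ghost R, g ≠ ε := by
    by_contra! H
    exact hnt (Set.eq_singleton_iff_unique_mem.2 ⟨hsf.1, H⟩)
  have hge := eps_mul_of_mem_ghost hR hg
  rcases gle_total hR (eps_mul_eps hR) hge with hεg | hgε'
  · exact ⟨g, hg, hεg, Ne.symm hgε⟩
  · obtain ⟨k, hk, hgk⟩ := hsf.2.2 g hg
    have hke := eps_mul_of_mem_ghost hR hk
    refine ⟨k, hk, by simpa only [hgk, hke] using gle_mul_right k hgε', fun hεk => hgε ?_⟩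
    rw [← hεk, mul_comm, hge] at hgk
    exact hgk

/-- The square makes `c = u / v` a usable witness: `u² ≤ (u / v) v² = u v` forces `u ≤ v`. -/
lemma gle_of_forall_gle_mul (hR : IsSupertropical R) (hsf : GhostSemifield R)
    (hnt : NontrivialG R) {u v : R} (hu : ε * u = u) (hv : ε * v = v)
    (h : ∀ c ∈ ghost R, glt ε c → gle (u * u) (c * (v * v))) : gle u v := by
  rcases gle_total hR hu hv with huv | hvu
  · exact huv
  by_cases hv0 : v = 0
  · obtain ⟨c, hc, hεc⟩ := exists_eps_glt hR hsf hnt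
    have huu := h c hc hεc
    rw [hv0, mul_zero, mul_zero] at huu
    rw [eq_zero_of_mul_self_eq_zero hR hsf hu (eq_zero_of_gle_zero huu), hv0]
    exact gle_refl hR (mul_zero ε)
  obtain ⟨k, hk, hvk⟩ := exists_mul_eq_eps hR hsf hv hv0
  have hcv : u * k * v = u := by rw [mul_right_comm, mul_assoc, hvk, mul_comm, hu]
  have hεc : gle ε (u * k) := by simpa only [hvk] using gle_mul_right k hvu
  have hc : ε * (u * k) = u * k := by rw [← mul_assoc, hu]
  by_cases hcε : u * k = ε
  · rw [← hcv, hcε, hv]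
    exact gle_refl hR hv
  have hc0 : u * k ≠ 0 := fun hc0 => hsf.1.2 (eq_zero_of_gle_zero (hc0 ▸ hεc))
  have hu0 : u ≠ 0 := fun hu0 => hc0 (by rw [hu0, zero_mul])
  have huu := h (u * k) (mem_ghost_of_eps_mul hc hc0) ⟨hεc, Ne.symm hcε⟩
  rw [← mul_assoc, hcv] at huu
  exact gle_of_mul_gle_mul_right hR hsf hu hv hu hu0 (by rwa [mul_comm v])

lemma add_add_eq_of_forall_sq_gle (hR : IsSupertropical R) (hsf : GhostSemifield R)
    (hnt : NontrivialG R) {p q t : R} (hp : ε * p = p) (hq : ε * q = q)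
    (h : ∀ c ∈ ghost R, glt ε c → gle (ε * t ^ 2) (c * (ε * (p * q)))) :
    p + q + t = p + q := by
  have hpq : ε * (p + q) = p + q := by rw [mul_add, hp, hq]
  refine add_eq_left_of_gle hR ?_ fun _ => hpq
  rw [hpq]
  refine gle_of_forall_gle_mul hR hsf hnt (eps_mul_eps_mul hR t) hpq fun c hc hεc => ?_
  have hsum := gle_mul_add_mul_add hR hp hq
  have hct := h c hc hεc
  rw [mul_mul_mul_comm, eps_mul_eps hR, ← sq]
  rw [← mul_assoc ε p, hp] at hct
  exact gle_trans hct (by simpa only [mul_comm c] using gle_mul_right c hsum)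

end Nontrivial

namespace IsQuadPair

variable {R : Type*} [CommSemiring R] {V : Type*} [AddCommMonoid V] [Module R V]
  {q : V → R} {b : V → V → R}

local notation "ε" => eps R

lemma map_add (hqb : IsQuadPair q b) (x y : V) : q (x + y) = q x + q y + b x y :=
  hqb.2.2.2.2 x y

lemma map_smul (hqb : IsQuadPair q b) (a : R) (x : V) : q (a • x) = a ^ 2 * q x :=
  hqb.1 a x

lemma polar_add_left (hqb : IsQuadPair q b) (x y z : V) : b (x + y) z = b x z + b y z :=
  hqb.2.2.1 x y z

lemma polar_add_right (hqb : IsQuadPair q b) (x y z : V) : b x (y + z) = b x y + b x z := by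
  rw [hqb.2.1, hqb.polar_add_left, hqb.2.1 y, hqb.2.1 z]

lemma polar_smul_smul (hqb : IsQuadPair q b) (a c : R) (x y : V) :
    b (a • x) (c • y) = a * c * b x y := by
  rw [hqb.2.2.2.1, hqb.2.1, hqb.2.2.2.1, hqb.2.1]
  ring

/-- Each cross term of `b (x₁ + y₁) (x₂ + y₂)` is absorbed by a sub-sum of
`q (x₁ + y₁) + q (x₂ + y₂)`, hence so is their sum. -/
lemma map_add_add (hqb : IsQuadPair q b) {x₁ y₁ x₂ y₂ : V}
    (h₁₁ : q (x₁ + x₂) = q x₁ + q x₂) (h₁₂ : q (x₁ + y₂) = q x₁ + q y₂)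
    (h₂₁ : q (y₁ + x₂) = q y₁ + q x₂) (h₂₂ : q (y₁ + y₂) = q y₁ + q y₂) :
    q (x₁ + y₁ + (x₂ + y₂)) = q (x₁ + y₁) + q (x₂ + y₂) := by
  rw [hqb.map_add] at h₁₁ h₁₂ h₂₁ h₂₂
  have hS : q (x₁ + y₁) + q (x₂ + y₂) =
      q x₁ + q y₁ + q x₂ + q y₂ + (b x₁ y₁ + b x₂ y₂) := by
    rw [hqb.map_add, hqb.map_add]; ring
  rw [hqb.map_add (x₁ + y₁), hqb.polar_add_left, hqb.polar_add_right, hqb.polar_add_right]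
  generalize q (x₁ + y₁) + q (x₂ + y₂) = S at hS ⊢
  have absorb : ∀ {s t : R} (r : R), s + t = s → S = s + r → S + t = S := by
    rintro s t r hst rfl
    rw [add_right_comm, hst]
  calc S + (b x₁ x₂ + b x₁ y₂ + (b y₁ x₂ + b y₁ y₂))
      = S + b x₁ x₂ + b x₁ y₂ + b y₁ x₂ + b y₁ y₂ := by ring
    _ = S := by
      rw [absorb (q y₁ + q y₂ + b x₁ y₁ + b x₂ y₂) h₁₁ (by rw [hS]; ring),
        absorb (q y₁ + q x₂ + b x₁ y₁ + b x₂ y₂) h₁₂ (by rw [hS]; ring),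
        absorb (q x₁ + q y₂ + b x₁ y₁ + b x₂ y₂) h₂₁ (by rw [hS]; ring),
        absorb (q x₁ + q x₂ + b x₁ y₁ + b x₂ y₂) h₂₂ (by rw [hS]; ring)]

lemma map_smul_add_smul_self (hR : IsSupertropical R) (hsf : GhostSemifield R)
    (hqb : IsQuadPair q b) (a c : R) (x : V) : q (a • x + c • x) = q (a • x) + q (c • x) := by
  rw [← add_smul, hqb.map_smul, hqb.map_smul, hqb.map_smul, add_sq_eq hR hsf, add_mul]

lemma map_smul_add_smul (hR : IsSupertropical R) (hsf : GhostSemifield R)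
    (hnt : NontrivialG R) (hqb : IsQuadPair q b) {x y : V}
    (h : gle (ε * (b x y) ^ 2) (ε * (q x * q y)) ∨
      (q x ∈ eSet R ∧ q y ∈ eSet R ∧
        ∀ c ∈ ghost R, glt ε c → gle (ε * (b x y) ^ 2) (c * (ε * (q x * q y)))))
    (a c : R) : q (a • x + c • y) = q (a • x) + q (c • y) := by
  rw [hqb.map_add, hqb.map_smul, hqb.map_smul, hqb.polar_smul_smul]
  rcases h with hweak | ⟨hx, hy, hgt⟩
  · refine add_add_eq_of_sq_gle hR hsf ?_
    convert gle_mul_right (a ^ 2 * c ^ 2) hweak using 1 <;> ring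
  · refine add_add_eq_of_forall_sq_gle hR hsf hnt
      (by rw [mul_left_comm, eps_mul_of_mem_eSet hR hx])
      (by rw [mul_left_comm, eps_mul_of_mem_eSet hR hy]) fun c₀ hc₀ hεc₀ => ?_
    convert gle_mul_right (a ^ 2 * c ^ 2) (hgt c₀ hc₀ hεc₀) using 1 <;> ring

end IsQuadPair

theorem stmt5_general {R : Type*} [CommSemiring R] (hR : IsSupertropical R)
    (hsf : GhostSemifield R) (hnt : NontrivialG R)
    {V : Type*} [AddCommMonoid V] [Module R V] (q : V → R) (b : V → V → R)
    (hqb : IsQuadPair q b) (x y : V)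
    (h : gle (eps R * (b x y) ^ 2) (eps R * (q x * q y)) ∨
      (q x ∈ eSet R ∧ q y ∈ eSet R ∧
        ∀ c ∈ ghost R, glt (eps R) c →
          gle (eps R * (b x y) ^ 2) (c * (eps R * (q x * q y))))) :
    QuasilinearOn q (Submodule.span R {x, y}) := by
  intro u hu v hv
  obtain ⟨a, a', rfl⟩ := Submodule.mem_span_pair.1 hu
  obtain ⟨c, c', rfl⟩ := Submodule.mem_span_pair.1 hv
  have hxy := hqb.map_smul_add_smul hR hsf hnt h
  refine hqb.map_add_add (hqb.map_smul_add_smul_self hR hsf a c x) (hxy a c') ?_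
    (hqb.map_smul_add_smul_self hR hsf a' c' y)
  rw [add_comm, hxy c a', add_comm]

/-- if `(x,y)` is weakly CS, or both `q(x), q(y)` are ghost and `(x,y)`
is almost CS, then `q` is quasilinear on `Rx + Ry`. -/
theorem stmt5 {R : Type*} [CommSemiring R] (hR : IsSupertropical R)
    (hsf : GhostSemifield R) (hnt : NontrivialG R)
    {V : Type*} [AddCommMonoid V] [Module R V] (q : V → R) (b : V → V → R)
    (hqb : IsQuadPair q b) (x y : V) (hx : x ≠ 0) (hy : y ≠ 0)
    (h : gle (eps R * (b x y) ^ 2) (eps R * (q x * q y)) ∨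
      (q x ∈ eSet R ∧ q y ∈ eSet R ∧
        ∀ c ∈ ghost R, glt (eps R) c →
          gle (eps R * (b x y) ^ 2) (c * (eps R * (q x * q y))))) :
    QuasilinearOn q (Submodule.span R {x, y}) :=
  stmt5_general hR hsf hnt q b hqb x y h

end Supertrop
end

section
/- Let R be a supertropical semiring such that eR is a nontrivial semifield, and let (q,b) be a quadratic pair on an R-module V. Let x, y, w ∈ V be anisotropic (q(x) ≠ 0, q(y) ≠ 0, q(w) ≠ 0). Then x + y is anisotropic and CS(x+y, w) ≤ CS(x,w) + CS(y,w) in the totally ordered semifield eR. -/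
open scoped Classical

namespace Supertrop

/-!
In `eR` the cross term of a square is absorbed, `e(p + r)² = ep² + er²`, because `e·pr` lies
below the larger of `ep²` and `er²`. Inversion on `𝒢(R)` reverses the order, and
`e·q(x)q(w) ≤ e·q(x+y)q(w)` since `q(x+y) = q(x) + q(y) + b(x,y)`; so each of the two summands
of `CS(x+y,w)` is bounded by the corresponding CS-ratio. Anisotropy of `x + y` is the absence
of zero sums in a supertropical semiring.
-/

section Order

variable {R : Type*} [CommSemiring R]

lemma gle_mul_right_s7 {a b : R} (h : gle a b) (c : R) : gle (a * c) (b * c) := by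
  unfold gle at *; rw [← add_mul, h]

lemma gle_mul_left {a b : R} (h : gle a b) (c : R) : gle (c * a) (c * b) := by
  unfold gle at *; rw [← mul_add, h]

lemma gle_add_add {a b c d : R} (h₁ : gle a b) (h₂ : gle c d) : gle (a + c) (b + d) := by
  unfold gle at *; rw [add_add_add_comm, h₁, h₂]

lemma gle_add_of_gle_left {a b : R} (h : gle a b) (c : R) : gle a (b + c) := by
  unfold gle at *; rw [← add_assoc, h]

lemma gle_add_of_gle_right {a b : R} (h : gle a b) (c : R) : gle a (c + b) := by
  unfold gle at *; rw [add_left_comm, h]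

lemma gle_self_add_s7 {a : R} (h : a + a = a) (c : R) : gle a (a + c) :=
  gle_add_of_gle_left h c

end Order

namespace IsSupertropical

variable {R : Type*} [CommSemiring R] (hR : IsSupertropical R)
include hR

lemma eps_mul_eps : eps R * eps R = eps R := by
  have h : eps R * eps R = eps R + eps R := by unfold eps; ring
  rw [h, hR.1]

lemma eps_mul_eps_mul (a : R) : eps R * (eps R * a) = eps R * a := by
  rw [← mul_assoc, hR.eps_mul_eps]

lemma eps_mul_of_mem_eSet {u : R} (hu : u ∈ eSet R) : eps R * u = u := by
  obtain ⟨a, rfl⟩ := hu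
  exact hR.eps_mul_eps_mul a

lemma eps_mul_add_self (a : R) : eps R * a + eps R * a = eps R * a := by
  rw [hR.2.2 _ _ rfl, hR.eps_mul_eps_mul]

lemma eq_zero_of_eps_mul_eq_zero {a : R} (h : eps R * a = 0) : a = 0 := by
  simpa using hR.2.2 a 0 (by rw [h, mul_zero])

lemma eq_zero_of_add_eq_zero {u v : R} (h : u + v = 0) : u = 0 := by
  by_cases he : eps R * u = eps R * v
  · have hv : v = 0 := hR.eq_zero_of_eps_mul_eq_zero (by rw [← hR.2.2 u v he, h])
    rwa [hv, add_zero] at h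
  · rcases hR.2.1 u v he with h' | h'
    · rwa [h'] at h
    · rw [h'] at h
      rwa [h, add_zero] at h'

lemma gle_total (a b : R) : gle (eps R * a) (eps R * b) ∨ gle (eps R * b) (eps R * a) := by
  by_cases he : eps R * a = eps R * b
  · left; rw [← he]; exact hR.eps_mul_add_self a
  · rcases hR.2.1 (eps R * a) (eps R * b) (by rwa [hR.eps_mul_eps_mul, hR.eps_mul_eps_mul]) with h | h
    · right; unfold gle; rwa [add_comm]
    · left; exact h

lemma eps_mul_mul_gle_add_sq (p r : R) :
    gle (eps R * (p * r)) (eps R * p ^ 2 + eps R * r ^ 2) := by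
  rcases hR.gle_total p r with h | h
  · refine gle_add_of_gle_right ?_ _
    simpa only [mul_assoc, sq] using gle_mul_right_s7 h r
  · refine gle_add_of_gle_left ?_ _
    simpa only [mul_assoc, mul_comm r p, sq] using gle_mul_right_s7 h p

lemma eps_mul_add_sq (p r : R) : eps R * (p + r) ^ 2 = eps R * p ^ 2 + eps R * r ^ 2 := by
  have h : eps R * (p + r) ^ 2 = (eps R + eps R) * (p * r) + (eps R * p ^ 2 + eps R * r ^ 2) := by
    ring
  rw [h, hR.1]
  exact hR.eps_mul_mul_gle_add_sq p r

lemma eps_mul_mul_mem_ghost (hsf : GhostSemifield R) {s t : R} (hs : s ≠ 0) (ht : t ≠ 0) :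
    eps R * (s * t) ∈ ghost R := by
  have hmem (a : R) (ha : a ≠ 0) : eps R * a ∈ ghost R :=
    ⟨⟨a, rfl⟩, fun h => ha (hR.eq_zero_of_eps_mul_eq_zero h)⟩
  have := hsf.2.1 _ (hmem s hs) _ (hmem t ht)
  rwa [mul_mul_mul_comm, hR.eps_mul_eps] at this

lemma gle_inv_of_gle {inv : R → R} (hinv : ∀ g ∈ ghost R, inv g ∈ ghost R ∧ g * inv g = eps R)
    {g h : R} (hg : g ∈ ghost R) (hh : h ∈ ghost R) (hgh : gle g h) : gle (inv h) (inv g) := by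
  obtain ⟨hig, hgg⟩ := hinv g hg
  obtain ⟨hih, hhh⟩ := hinv h hh
  have := gle_mul_right_s7 hgh (inv h * inv g)
  rwa [mul_left_comm, hgg, mul_comm, hR.eps_mul_of_mem_eSet hih.1, ← mul_assoc, hhh,
    hR.eps_mul_of_mem_eSet hig.1] at this

end IsSupertropical

theorem stmt7_general {R : Type*} [CommSemiring R] (hR : IsSupertropical R)
    (hsf : GhostSemifield R)
    (inv : R → R) (hinv : ∀ g ∈ ghost R, inv g ∈ ghost R ∧ g * inv g = eps R)
    {V : Type*} [AddCommMonoid V] [Module R V] (q : V → R) (b : V → V → R)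
    (hqb : IsQuadPair q b) (x y w : V)
    (hx : q x ≠ 0) (hy : q y ≠ 0) (hw : q w ≠ 0) :
    q (x + y) ≠ 0 ∧
    gle (CSratio q b inv (x + y) w) (CSratio q b inv x w + CSratio q b inv y w) := by
  obtain ⟨-, -, hbadd, -, hqadd⟩ := hqb
  have hxy : q (x + y) ≠ 0 := by
    rw [hqadd, add_assoc]
    exact fun h => hx (hR.eq_zero_of_add_eq_zero h)
  refine ⟨hxy, ?_⟩
  have hD := hR.eps_mul_mul_mem_ghost hsf hxy hw
  have hDx : gle (eps R * (q x * q w)) (eps R * (q (x + y) * q w)) := by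
    rw [hqadd, add_assoc, add_mul, mul_add]
    exact gle_self_add_s7 (hR.eps_mul_add_self _) _
  have hDy : gle (eps R * (q y * q w)) (eps R * (q (x + y) * q w)) := by
    rw [hqadd, add_comm (q x), add_assoc, add_mul, mul_add]
    exact gle_self_add_s7 (hR.eps_mul_add_self _) _
  unfold CSratio
  rw [hbadd, hR.eps_mul_add_sq, add_mul]
  exact gle_add_add
    (gle_mul_left (hR.gle_inv_of_gle hinv (hR.eps_mul_mul_mem_ghost hsf hx hw) hD hDx) _)
    (gle_mul_left (hR.gle_inv_of_gle hinv (hR.eps_mul_mul_mem_ghost hsf hy hw) hD hDy) _)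

/-- subadditivity of the CS-ratio: `CS(x+y, w) ≤ CS(x,w) + CS(y,w)`
(and `x + y` is anisotropic). -/
theorem stmt7 {R : Type*} [CommSemiring R] (hR : IsSupertropical R)
    (hsf : GhostSemifield R) (hnt : NontrivialG R)
    (inv : R → R) (hinv : ∀ g ∈ ghost R, inv g ∈ ghost R ∧ g * inv g = eps R)
    {V : Type*} [AddCommMonoid V] [Module R V] (q : V → R) (b : V → V → R)
    (hqb : IsQuadPair q b) (x y w : V)
    (hx : q x ≠ 0) (hy : q y ≠ 0) (hw : q w ≠ 0) :
    q (x + y) ≠ 0 ∧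
    gle (CSratio q b inv (x + y) w) (CSratio q b inv x w + CSratio q b inv y w) :=
  stmt7_general hR hsf inv hinv q b hqb x y w hx hy hw

end Supertrop
end

section
/- Let R be a supertropical semiring, V a free R-module with base (ε_i)_{i∈I}, and q a quasilinear quadratic form on V (i.e. q(u+v) = q(u)+q(v) for all u,v ∈ V). If x ∈ V \ {0} is q-minimal, then |supp(x)| = 1 if q(x) ∈ 𝒯(R), and |supp(x)| ≤ 2 if q(x) ∈ 𝒢(R). -/
open scoped Classical

namespace Supertrop

/-!
Quasilinearity makes `q` additive, so writing `x = u + w` with `u, w < x` expresses `q x` as a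
sum of two values both different from `q x`; in a supertropical semiring this forces
`q x = e·q u = e·q w`, so `q x` is ghost. Hence a tangible `q x` admits no such split, i.e.
`x` has one coordinate. If `x` had three coordinates `i, j, k`, splitting off `i` and `j` gives
`e·q(x_i ε_i) = q x = e·q(x_j ε_j)`, whence `q(x_i ε_i + x_j ε_j) = q x` although
`x_i ε_i + x_j ε_j < x`, contradicting minimality.
-/

theorem IsSupertropical.eq_eps_mul_of_add_eq {R : Type*} [CommSemiring R]
    (hR : IsSupertropical R) {p r s : R} (h : p + r = s) (hp : p ≠ s) (hr : r ≠ s) :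
    s = eps R * p ∧ s = eps R * r := by
  obtain ⟨-, hne, heq⟩ := hR
  by_cases hc : eps R * p = eps R * r
  · have hpr : p + r = eps R * r := heq p r hc
    exact ⟨by rw [← h, hpr, hc], by rw [← h, hpr]⟩
  · rcases hne p r hc with h' | h'
    · exact absurd (h' ▸ h) hp
    · exact absurd (h' ▸ h) hr

theorem QMinimal.eq_eps_mul_of_add_eq {R : Type*} [CommSemiring R] (hR : IsSupertropical R)
    {V : Type*} [AddCommMonoid V] {q : V → R} (hql : ∀ u v : V, q (u + v) = q u + q v)
    {x u w : V} (hmin : QMinimal q x) (h : u + w = x) (hu : mlt u x) (hw : mlt w x) :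
    q x = eps R * q u :=
  (hR.eq_eps_mul_of_add_eq (by rw [← hql, h]) (hmin u hu).2 (hmin w hw).2).1

section Restrict

variable {R : Type*} [CommSemiring R] {V : Type*} [AddCommMonoid V] [Module R V]
  {ι : Type*} (bV : Module.Basis ι R V)

theorem restrict_support (x : V) : restrict bV x (bV.repr x).support = x := by
  simpa [restrict, Finsupp.linearCombination_apply, Finsupp.sum] using bV.linearCombination_repr x

theorem restrict_union (x : V) {J K : Finset ι} (h : Disjoint J K) :
    restrict bV x (J ∪ K) = restrict bV x J + restrict bV x K :=
  Finset.sum_union h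

theorem repr_restrict (x : V) (J : Finset ι) (i : ι) :
    bV.repr (restrict bV x J) i = if i ∈ J then bV.repr x i else 0 := by
  simp [restrict, Finsupp.single_apply]

theorem restrict_add_restrict_sdiff {x : V} {J : Finset ι} (hJ : J ⊆ (bV.repr x).support) :
    restrict bV x J + restrict bV x ((bV.repr x).support \ J) = x := by
  rw [← restrict_union bV x Finset.disjoint_sdiff, Finset.union_sdiff_of_subset hJ,
    restrict_support]

theorem restrict_mlt_self {x : V} {J : Finset ι} (hJ : J ⊆ (bV.repr x).support) {i : ι}
    (hi : i ∈ (bV.repr x).support) (hiJ : i ∉ J) : mlt (restrict bV x J) x := by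
  refine ⟨⟨_, restrict_add_restrict_sdiff bV hJ⟩, fun h ↦ ?_⟩
  have := repr_restrict bV x J i
  rw [h, if_neg hiJ] at this
  exact Finsupp.mem_support_iff.mp hi this

end Restrict

theorem QMinimal.eq_eps_mul_restrict_singleton {R : Type*} [CommSemiring R]
    (hR : IsSupertropical R) {V : Type*} [AddCommMonoid V] [Module R V] {ι : Type*}
    (bV : Module.Basis ι R V) {q : V → R} (hql : ∀ u v : V, q (u + v) = q u + q v) {x : V}
    (hmin : QMinimal q x) {i j : ι} (hi : i ∈ (bV.repr x).support)
    (hj : j ∈ (bV.repr x).support) (hij : i ≠ j) :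
    q x = eps R * q (restrict bV x {i}) := by
  have hsub : {i} ⊆ (bV.repr x).support := Finset.singleton_subset_iff.mpr hi
  exact hmin.eq_eps_mul_of_add_eq hR hql (restrict_add_restrict_sdiff bV hsub)
    (restrict_mlt_self bV hsub hj (by simpa using hij.symm))
    (restrict_mlt_self bV Finset.sdiff_subset hi (by simp))

theorem stmt12_general {R : Type*} [CommSemiring R] (hR : IsSupertropical R)
    {V : Type*} [AddCommMonoid V] [Module R V] {ι : Type*} (bV : Module.Basis ι R V)
    (q : V → R)
    (hql : ∀ u v : V, q (u + v) = q u + q v)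
    (x : V) (hx : x ≠ 0) (hmin : QMinimal q x) :
    (q x ∈ tangible R → (bV.repr x).support.card = 1) ∧
    (q x ∈ ghost R → (bV.repr x).support.card ≤ 2) := by
  constructor
  · intro ht
    have hpos : 0 < (bV.repr x).support.card := by simpa using hx
    by_contra hcard
    obtain ⟨i, hi, j, hj, hij⟩ :=
      Finset.one_lt_card.mp (show 1 < (bV.repr x).support.card by omega)
    exact ht ⟨_, (hmin.eq_eps_mul_restrict_singleton hR bV hql hi hj hij).symm⟩
  · intro _
    by_contra! hcard
    obtain ⟨i, hi, j, hj, k, hk, hij, hik, hjk⟩ := Finset.two_lt_card.mp hcard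
    have hqi := hmin.eq_eps_mul_restrict_singleton hR bV hql hi hj hij
    have hqj := hmin.eq_eps_mul_restrict_singleton hR bV hql hj hi hij.symm
    have hlt : mlt (restrict bV x ({i} ∪ {j})) x :=
      restrict_mlt_self bV (by simp [Finset.insert_subset_iff, hi, hj]) hk
        (by simp [hik.symm, hjk.symm])
    have hpair : q (restrict bV x ({i} ∪ {j})) = q x := by
      rw [restrict_union bV x (Finset.disjoint_singleton.mpr hij), hql,
        hR.2.2 _ _ (hqi.symm.trans hqj), ← hqj]
    exact (hmin _ hlt).2 hpair

/-- for a quasilinear quadratic form, a `q`-minimal vector has support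
of size `1` if `q(x)` is tangible, and at most `2` if `q(x)` is ghost. -/
theorem stmt12 {R : Type*} [CommSemiring R] (hR : IsSupertropical R)
    {V : Type*} [AddCommMonoid V] [Module R V] {ι : Type*} (bV : Module.Basis ι R V)
    (q : V → R) (hhom : ∀ (a : R) (v : V), q (a • v) = a ^ 2 * q v)
    (hql : ∀ u v : V, q (u + v) = q u + q v)
    (x : V) (hx : x ≠ 0) (hmin : QMinimal q x) :
    (q x ∈ tangible R → (bV.repr x).support.card = 1) ∧
    (q x ∈ ghost R → (bV.repr x).support.card ≤ 2) :=
  stmt12_general hR bV q hql x hx hmin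

end Supertrop
end
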